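/- For positive integers n and q and a non-negative integer k, the limit as real x tends to -k (through non-integer values) of ψ(n x) / ψ(q x) equals q / n. -/

import Mathlib

/-!
The digamma function `ψ = Γ'/Γ` has a simple pole of residue `-1` at every `-N`, `N : ℕ`: iterating
`ψ (s + 1) = ψ s + 1 / s` gives `ψ s = ψ (s + N + 1) - ∑_{j ≤ N} 1 / (s + j)`, in which only
`1 / (s + N)` blows up at `-N`. Hence `(x + k) ψ (m x) → -1 / m` as `x → -k`, and the ratio
`ψ (n x) / ψ (q x)` tends to `(-1 / n) / (-1 / q) = q / n`.
-/

open Filter Topology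

namespace Complex

theorem analyticAt_Gamma {s : ℂ} (hs : ∀ m : ℕ, s ≠ -m) : AnalyticAt ℂ Gamma s := by
  simpa only [Pi.inv_def, inv_inv] using
    (differentiable_one_div_Gamma.analyticAt s).inv (inv_ne_zero (Gamma_ne_zero hs))

theorem continuousAt_digamma {s : ℂ} (hs : ∀ m : ℕ, s ≠ -m) : ContinuousAt digamma s :=
  (analyticAt_Gamma hs).deriv.continuousAt.div (analyticAt_Gamma hs).continuousAt (Gamma_ne_zero hs)

end Complex

namespace Real

noncomputable def digamma : ℝ → ℝ := logDeriv Gamma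

theorem digamma_eq_re_complex_digamma (s : ℝ) : digamma s = (Complex.digamma s).re := by
  by_cases hs : ∀ m : ℕ, s ≠ -m
  · have hΓ : HasDerivAt Gamma (deriv Complex.Gamma s).re s :=
      (Complex.differentiableAt_Gamma s (by exact_mod_cast hs)).hasDerivAt.real_of_complex
    rw [digamma, Complex.digamma, logDeriv_apply, logDeriv_apply, hΓ.deriv, Complex.Gamma_ofReal,
      Complex.div_ofReal_re]
  · -- at a pole both Gamma functions vanish, so both sides are `0`
    obtain ⟨m, rfl⟩ := not_forall_not.mp hs
    rw [digamma, Complex.digamma, logDeriv_apply, logDeriv_apply, Gamma_neg_nat_eq_zero]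
    push_cast
    rw [Complex.Gamma_neg_nat_eq_zero]
    simp

theorem digamma_add_one {s : ℝ} (hs : ∀ m : ℕ, s ≠ -m) : digamma (s + 1) = digamma s + s⁻¹ := by
  rw [digamma_eq_re_complex_digamma, digamma_eq_re_complex_digamma, Complex.ofReal_add,
    Complex.ofReal_one, Complex.digamma_apply_add_one _ (by exact_mod_cast hs)]
  simp

theorem digamma_add_nat {s : ℝ} (hs : ∀ m : ℕ, s ≠ -m) (N : ℕ) :
    digamma (s + N) = digamma s + ∑ j ∈ Finset.range N, (s + j)⁻¹ := by
  induction N with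
  | zero => simp
  | succ N ih =>
    have hsN : ∀ m : ℕ, s + N ≠ -m := fun m h => hs (m + N) (by push_cast; linarith)
    rw [Nat.cast_succ, ← add_assoc, digamma_add_one hsN, ih, Finset.sum_range_succ, add_assoc]

theorem continuousAt_digamma {s : ℝ} (hs : ∀ m : ℕ, s ≠ -m) : ContinuousAt digamma s := by
  have h : ContinuousAt (fun x : ℝ => (Complex.digamma x).re) s :=
    Complex.continuous_re.continuousAt.comp <|
      (Complex.continuousAt_digamma (by exact_mod_cast hs)).comp
        Complex.continuous_ofReal.continuousAt
  simpa only [← digamma_eq_re_complex_digamma] using h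

theorem eventually_nhdsNE_neg_nat_ne_neg_nat (N : ℕ) :
    ∀ᶠ s : ℝ in 𝓝[≠] (-(N : ℝ)), ∀ m : ℕ, s ≠ -m := by
  filter_upwards [self_mem_nhdsWithin, nhdsWithin_le_nhds (Metric.ball_mem_nhds _ one_pos)]
    with s hne hball m rfl
  rw [Metric.mem_ball, Real.dist_eq, abs_sub_lt_iff] at hball
  have h1 : m < N + 1 := by exact_mod_cast (by linarith : (m : ℝ) < N + 1)
  have h2 : N < m + 1 := by exact_mod_cast (by linarith : (N : ℝ) < m + 1)
  exact hne (by rw [show m = N by omega]; rfl)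

theorem tendsto_mul_digamma_nhdsNE_neg_nat (N : ℕ) :
    Tendsto (fun s => (s + N) * digamma s) (𝓝[≠] (-(N : ℝ))) (𝓝 (-1)) := by
  set g : ℝ → ℝ := fun s => digamma (s + (N + 1 : ℕ)) - ∑ j ∈ Finset.range N, (s + j)⁻¹
  have hg : ContinuousAt g (-N) := by
    refine ContinuousAt.sub ?_ (tendsto_finsetSum _ fun j hj => ?_)
    · refine (continuousAt_digamma fun m h => ?_).comp (continuous_add_const _).continuousAt
      push_cast at h
      linarith [(m.cast_nonneg : (0 : ℝ) ≤ m)]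
    · refine (continuous_add_const _).continuousAt.inv₀ ?_
      have : (j : ℝ) < N := by exact_mod_cast Finset.mem_range.mp hj
      linarith
  have heq : ∀ᶠ s in 𝓝[≠] (-(N : ℝ)), (s + N) * g s - 1 = (s + N) * digamma s := by
    filter_upwards [self_mem_nhdsWithin, eventually_nhdsNE_neg_nat_ne_neg_nat N] with s hne hs
    have hsN : s + N ≠ 0 := fun h => hne (eq_neg_of_add_eq_zero_left h)
    simp only [g, digamma_add_nat hs, Finset.sum_range_succ]
    field_simp
    ring
  have hlim : Tendsto (fun s => (s + N) * g s - 1) (𝓝 (-(N : ℝ))) (𝓝 ((-N + N) * g (-N) - 1)) :=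
    (((continuous_add_const _).continuousAt.mul hg).sub continuousAt_const).tendsto
  rw [neg_add_cancel, zero_mul, zero_sub] at hlim
  exact (hlim.mono_left nhdsWithin_le_nhds).congr' heq

theorem tendsto_mul_digamma_nat_mul_nhdsNE_neg_nat {m : ℕ} (hm : m ≠ 0) (k : ℕ) :
    Tendsto (fun x => (x + k) * digamma (m * x)) (𝓝[≠] (-(k : ℝ))) (𝓝 (-1 / m)) := by
  have hm' : (m : ℝ) ≠ 0 := Nat.cast_ne_zero.mpr hm
  have hpole : (m : ℝ) * -k = -(m * k : ℕ) := by push_cast; ring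
  have hmap : Tendsto (fun x : ℝ => m * x) (𝓝[≠] (-(k : ℝ))) (𝓝[≠] (-(m * k : ℕ) : ℝ)) := by
    rw [← hpole]
    refine (continuous_const_mul _).continuousWithinAt.tendsto_nhdsWithin fun x hx h => hx ?_
    exact mul_left_cancel₀ hm' h
  have hres := ((tendsto_mul_digamma_nhdsNE_neg_nat (m * k)).comp hmap).const_mul (m : ℝ)⁻¹
  convert hres using 2 with x
  · simp only [Function.comp_apply]
    push_cast
    field_simp
  · ring

theorem tendsto_digamma_nat_mul_div_digamma_nat_mul_nhdsNE_neg_nat {n q : ℕ} (hn : n ≠ 0)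
    (hq : q ≠ 0) (k : ℕ) :
    Tendsto (fun x => digamma (n * x) / digamma (q * x)) (𝓝[≠] (-(k : ℝ))) (𝓝 (q / n)) := by
  have hq' : (q : ℝ) ≠ 0 := Nat.cast_ne_zero.mpr hq
  have hn' : (n : ℝ) ≠ 0 := Nat.cast_ne_zero.mpr hn
  have hlim := (tendsto_mul_digamma_nat_mul_nhdsNE_neg_nat hn k).div
    (tendsto_mul_digamma_nat_mul_nhdsNE_neg_nat hq k) (by simpa using hq')
  rw [show (-1 / n : ℝ) / (-1 / q) = q / n by field_simp] at hlim
  refine hlim.congr' ?_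
  filter_upwards [self_mem_nhdsWithin] with x hx
  exact mul_div_mul_left _ _ fun h => hx (eq_neg_of_add_eq_zero_left h)

end Real

theorem real_digamma_ratio_limit (n q : ℕ) (hn : 0 < n) (hq : 0 < q) (k : ℕ) :
    Filter.Tendsto
      (fun x : ℝ =>
        (deriv Real.Gamma (n * x) / Real.Gamma (n * x)) /
        (deriv Real.Gamma (q * x) / Real.Gamma (q * x)))
      (nhdsWithin (-(k : ℝ)) {x : ℝ | ∀ m : ℤ, x ≠ m})
      (nhds ((q : ℝ) / n)) := by
  have hnonint : {x : ℝ | ∀ m : ℤ, x ≠ m} ⊆ {-(k : ℝ)}ᶜ := fun x hx ↦ by simpa using hx (-k)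
  -- `Real.digamma x` unfolds to `deriv Real.Gamma x / Real.Gamma x`
  exact (Real.tendsto_digamma_nat_mul_div_digamma_nat_mul_nhdsNE_neg_nat hn.ne' hq.ne' k).mono_left
    (nhdsWithin_mono _ hnonint)
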